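/- arXiv:2101.09346 — 6 statements merged into one kernel-verified Lean document; each statement's English description precedes it below -/
import Mathlib

section
/- For any N points x_1,...,x_N on the Stiefel manifold St(d,r), letting x̂ = (1/N)∑ x_i be the Euclidean mean and x̄ ∈ St(d,r) any minimizer of ∑_i ‖y − x_i‖_F² over y ∈ St(d,r), we have (1/2)∑_i ‖x_i − x̄‖_F² ≤ ∑_i ‖x_i − x̂‖_F² ≤ ∑_i ‖x_i − x̄‖_F². -/
open Matrix BigOperators Finset

noncomputable def fnorm {d r : ℕ} (A : Matrix (Fin d) (Fin r) ℝ) : ℝ :=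
  Real.sqrt (∑ i, ∑ j, (A i j) ^ 2)

def ip {d r : ℕ} (A B : Matrix (Fin d) (Fin r) ℝ) : ℝ :=
  ∑ i, ∑ j, A i j * B i j

def Stiefel (d r : ℕ) : Set (Matrix (Fin d) (Fin r) ℝ) :=
  {x | xᵀ * x = 1}

/-!
Flattening matrices into `EuclideanSpace` turns the Frobenius norm into an inner-product norm.
The parallel-axis identity `∑ ‖xᵢ - y‖² = ∑ ‖xᵢ - x̂‖² + N ‖y - x̂‖²` shows that `x̂` minimises
the sum of squares over all matrices, which is the upper bound. For the lower bound, each `xₖ`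
lies on `St(d,r)`, so `∑ ‖xᵢ - x̄‖² ≤ ∑ ‖xᵢ - xₖ‖²`; by the same identity with `y = xₖ`, the
average over `k` of the right-hand sides is `2 ∑ ‖xᵢ - x̂‖²`.
-/

section MeanSquaredDistance

variable {ι E : Type*} [Fintype ι] [NormedAddCommGroup E] [InnerProductSpace ℝ E]
  {x : ι → E} {m : E}

theorem sum_norm_sub_sq_eq_add_card_mul (hm : (Fintype.card ι : ℝ) • m = ∑ i, x i) (y : E) :
    ∑ i, ‖x i - y‖ ^ 2 = ∑ i, ‖x i - m‖ ^ 2 + Fintype.card ι * ‖y - m‖ ^ 2 := by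
  have hdev : ∑ i, (x i - m) = 0 := by
    rw [sum_sub_distrib, sum_const, card_univ, ← Nat.cast_smul_eq_nsmul ℝ, hm, sub_self]
  have hcross : ∑ i, inner ℝ (x i - m) (y - m) = 0 := by
    rw [← sum_inner, hdev, inner_zero_left]
  calc ∑ i, ‖x i - y‖ ^ 2 = ∑ i, ‖(x i - m) - (y - m)‖ ^ 2 := by simp
    _ = ∑ i, (‖x i - m‖ ^ 2 - 2 * inner ℝ (x i - m) (y - m) + ‖y - m‖ ^ 2) := by
      simp only [norm_sub_sq_real]
    _ = ∑ i, ‖x i - m‖ ^ 2 + Fintype.card ι * ‖y - m‖ ^ 2 := by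
      rw [sum_add_distrib, sum_sub_distrib, ← mul_sum, hcross, sum_const, card_univ,
        nsmul_eq_mul]
      ring

theorem sum_norm_sub_mean_sq_le (hm : (Fintype.card ι : ℝ) • m = ∑ i, x i) (y : E) :
    ∑ i, ‖x i - m‖ ^ 2 ≤ ∑ i, ‖x i - y‖ ^ 2 := by
  rw [sum_norm_sub_sq_eq_add_card_mul hm y]
  exact le_add_of_nonneg_right (by positivity)

theorem sum_norm_sub_sq_le_two_mul_of_forall_le_sample [Nonempty ι]
    (hm : (Fintype.card ι : ℝ) • m = ∑ i, x i) {c : E}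
    (hc : ∀ k, ∑ i, ‖x i - c‖ ^ 2 ≤ ∑ i, ‖x i - x k‖ ^ 2) :
    ∑ i, ‖x i - c‖ ^ 2 ≤ 2 * ∑ i, ‖x i - m‖ ^ 2 := by
  have hcard : (0 : ℝ) < Fintype.card ι := by exact_mod_cast Fintype.card_pos
  have hsum := sum_le_sum fun k (_ : k ∈ univ) => hc k
  simp only [sum_norm_sub_sq_eq_add_card_mul hm (x _), sum_add_distrib, ← mul_sum, sum_const,
    card_univ, nsmul_eq_mul] at hsum
  nlinarith

end MeanSquaredDistance

def Matrix.toEuclideanSpace {m n : Type*} : Matrix m n ℝ →ₗ[ℝ] EuclideanSpace ℝ (m × n) where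
  toFun A := WithLp.toLp 2 fun p => A p.1 p.2
  map_add' _ _ := rfl
  map_smul' _ _ := rfl

@[simp]
theorem Matrix.toEuclideanSpace_apply {m n : Type*} (A : Matrix m n ℝ) (p : m × n) :
    A.toEuclideanSpace p = A p.1 p.2 :=
  rfl

theorem fnorm_eq_norm_toEuclideanSpace {d r : ℕ} (A : Matrix (Fin d) (Fin r) ℝ) :
    fnorm A = ‖A.toEuclideanSpace‖ := by
  simp [fnorm, EuclideanSpace.norm_eq, Fintype.sum_prod_type]

theorem stmt0_general {N d r : ℕ} (hN : 0 < N)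
    (x : Fin N → Matrix (Fin d) (Fin r) ℝ) (hx : ∀ i, x i ∈ Stiefel d r)
    (xhat : Matrix (Fin d) (Fin r) ℝ) (hxhat : xhat = ((N : ℝ))⁻¹ • ∑ i, x i)
    (xbar : Matrix (Fin d) (Fin r) ℝ)
    (hmin : ∀ y ∈ Stiefel d r,
      ∑ i, fnorm (xbar - x i) ^ 2 ≤ ∑ i, fnorm (y - x i) ^ 2) :
    (1 / 2) * ∑ i, fnorm (x i - xbar) ^ 2 ≤ ∑ i, fnorm (x i - xhat) ^ 2 ∧
      ∑ i, fnorm (x i - xhat) ^ 2 ≤ ∑ i, fnorm (x i - xbar) ^ 2 := by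
  have : Nonempty (Fin N) := ⟨⟨0, hN⟩⟩
  have hmean : (Fintype.card (Fin N) : ℝ) • xhat.toEuclideanSpace =
      ∑ i, (x i).toEuclideanSpace := by
    rw [Fintype.card_fin, hxhat, map_smul, map_sum, smul_inv_smul₀ (by positivity)]
  simp only [fnorm_eq_norm_toEuclideanSpace, map_sub] at hmin ⊢
  have hsample (k : Fin N) : ∑ i, ‖(x i).toEuclideanSpace - xbar.toEuclideanSpace‖ ^ 2 ≤
      ∑ i, ‖(x i).toEuclideanSpace - (x k).toEuclideanSpace‖ ^ 2 := by
    simpa only [norm_sub_rev] using hmin (x k) (hx k)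
  refine ⟨?_, sum_norm_sub_mean_sq_le hmean _⟩
  linarith [sum_norm_sub_sq_le_two_mul_of_forall_le_sample hmean hsample]

theorem stmt0 {N d r : ℕ} (hN : 0 < N)
    (x : Fin N → Matrix (Fin d) (Fin r) ℝ) (hx : ∀ i, x i ∈ Stiefel d r)
    (xhat : Matrix (Fin d) (Fin r) ℝ) (hxhat : xhat = ((N : ℝ))⁻¹ • ∑ i, x i)
    (xbar : Matrix (Fin d) (Fin r) ℝ) (hmem : xbar ∈ Stiefel d r)
    (hmin : ∀ y ∈ Stiefel d r,
      ∑ i, fnorm (xbar - x i) ^ 2 ≤ ∑ i, fnorm (y - x i) ^ 2) :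
    (1 / 2) * ∑ i, fnorm (x i - xbar) ^ 2 ≤ ∑ i, fnorm (x i - xhat) ^ 2 ∧
      ∑ i, fnorm (x i - xhat) ^ 2 ≤ ∑ i, fnorm (x i - xbar) ^ 2 :=
  stmt0_general hN x hx xhat hxhat xbar hmin
end

section
/- Let x_1,...,x_N ∈ St(d,r), x̂ = (1/N)∑ x_i, and x̄ the induced arithmetic mean (projection of x̂ onto St(d,r)). If ∑_i ‖x_i − x̄‖_F² ≤ N/2, then ‖x̄ − x̂‖_F ≤ (2√r / N) · ∑_i ‖x_i − x̄‖_F². -/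
open Matrix BigOperators Finset

/-!
Rotating the maximiser, `xbar ↦ G * xbar` with `G` orthogonal, shows that `S * xbarᵀ` is
symmetric, where `S = ∑ i, x i`; hence `S = xbar * M` with `M = xbarᵀ * S` symmetric. For Stiefel
matrices `(x - xbar)ᵀ * (x - xbar) = 2 - xᵀ * xbar - xbarᵀ * x`, so summing over `i` gives
`2 * N - 2 * M = ∑ i, (x i - xbar)ᵀ * (x i - xbar)`, that is,
`xbar - xhat = (2 * N)⁻¹ • xbar * ∑ i, (x i - xbar)ᵀ * (x i - xbar)`. Submultiplicativity of the
Frobenius norm and `‖xbar‖_F = √r` then bound `‖xbar - xhat‖_F` by `√r / (2 * N)` times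
`∑ i, ‖x i - xbar‖_F ^ 2`.
-/

open scoped Matrix.Norms.Frobenius

lemma eq_zero_of_forall_mul_le_sq_mul {δ C : ℝ} (h : ∀ t : ℝ, t * δ ≤ t ^ 2 * C) : δ = 0 := by
  have hK : 0 < |C| + 1 := by positivity
  have ht := h (δ / (|C| + 1))
  rw [div_mul_eq_mul_div, div_pow, div_mul_eq_mul_div, div_le_div_iff₀ hK (by positivity)] at ht
  have : δ ^ 2 * (|C| + 1) ≤ δ ^ 2 * C := by nlinarith
  nlinarith [le_abs_self C, sq_nonneg δ]

section PlaneRotation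

variable {n : Type*} [Fintype n] [DecidableEq n]

def planeRotation (k l : n) (c s : ℝ) : Matrix n n ℝ :=
  1 + (c - 1) • (single k k 1 + single l l 1) + s • (single l k 1 - single k l 1)

lemma planeRotation_transpose_mul_self {k l : n} (hkl : k ≠ l) {c s : ℝ}
    (hcs : c ^ 2 + s ^ 2 = 1) : (planeRotation k l c s)ᵀ * planeRotation k l c s = 1 := by
  set D : Matrix n n ℝ := single k k 1 + single l l 1
  set W : Matrix n n ℝ := single l k 1 - single k l 1
  have hDD : D * D = D := by simp [D, mul_add, add_mul, hkl, hkl.symm]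
  have hDW : D * W = W := by simp [D, W, mul_sub, add_mul, hkl, hkl.symm]
  have hWD : W * D = W := by simp [D, W, sub_mul, mul_add, hkl, hkl.symm]; abel
  have hWW : W * W = -D := by simp [D, W, mul_sub, sub_mul, hkl, hkl.symm]; abel
  have hDT : Dᵀ = D := by simp [D]
  have hWT : Wᵀ = -W := by simp [W]
  change (1 + (c - 1) • D + s • W)ᵀ * (1 + (c - 1) • D + s • W) = 1
  simp only [transpose_add, transpose_smul, transpose_one, hDT, hWT, smul_neg, add_mul, mul_add,
    one_mul, mul_one, smul_mul_assoc, mul_smul_comm, neg_mul, hDD, hDW, hWD, hWW]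
  match_scalars <;> first | linear_combination hcs | ring

lemma trace_planeRotation_transpose_mul (k l : n) (c s : ℝ) (T : Matrix n n ℝ) :
    trace ((planeRotation k l c s)ᵀ * T) =
      trace T + (c - 1) * (T k k + T l l) + s * (T l k - T k l) := by
  simp only [planeRotation, transpose_add, transpose_smul, transpose_one, transpose_sub,
    transpose_single, add_mul, sub_mul, smul_mul_assoc, one_mul, trace_add, trace_sub, trace_smul,
    trace_single_mul, smul_eq_mul]

lemma isSymm_of_forall_trace_transpose_mul_le {T : Matrix n n ℝ}
    (h : ∀ G : Matrix n n ℝ, Gᵀ * G = 1 → trace (Gᵀ * T) ≤ trace T) : T.IsSymm := by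
  ext k l
  rw [transpose_apply]
  rcases eq_or_ne k l with rfl | hkl
  · rfl
  refine sub_eq_zero.mp (eq_zero_of_forall_mul_le_sq_mul (C := T k k + T l l) fun t ↦ ?_)
  have hpos : 0 < 1 + t ^ 2 := by positivity
  -- the rational parametrisation of the circle keeps the first-order condition polynomial in `t`
  have hG := h _ (planeRotation_transpose_mul_self hkl (c := (1 - t ^ 2) / (1 + t ^ 2))
    (s := 2 * t / (1 + t ^ 2)) (by field_simp; ring))
  rw [trace_planeRotation_transpose_mul] at hG
  have hG' : (-(2 * t ^ 2) * (T k k + T l l) + 2 * t * (T l k - T k l)) / (1 + t ^ 2) ≤ 0 := by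
    convert sub_nonpos.mpr hG using 1
    field_simp
    ring
  linarith [(div_le_iff₀ hpos).mp hG']

end PlaneRotation

lemma frobenius_norm_sum_transpose_mul_self_le {ι m n : Type*} [Fintype ι] [Fintype m]
    [Fintype n] (E : ι → Matrix m n ℝ) : ‖∑ i, (E i)ᵀ * E i‖ ≤ ∑ i, ‖E i‖ ^ 2 := by
  refine (norm_sum_le _ _).trans (Finset.sum_le_sum fun i _ ↦ ?_)
  simpa [frobenius_norm_transpose, sq] using frobenius_norm_mul (E i)ᵀ (E i)

section Stiefel

variable {d r : ℕ}

lemma ip_eq_trace (A B : Matrix (Fin d) (Fin r) ℝ) : ip A B = trace (Aᵀ * B) := by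
  simp only [ip, trace, Matrix.diag, mul_apply, transpose_apply]
  exact Finset.sum_comm

lemma fnorm_sq (A : Matrix (Fin d) (Fin r) ℝ) : fnorm A ^ 2 = trace (Aᵀ * A) := by
  rw [fnorm, Real.sq_sqrt (by positivity), ← ip_eq_trace, ip]
  simp only [sq]

lemma fnorm_eq_norm (A : Matrix (Fin d) (Fin r) ℝ) : fnorm A = ‖A‖ := by
  simp [fnorm, frobenius_norm_def, Real.sqrt_eq_rpow]

lemma fnorm_of_mem_Stiefel {B : Matrix (Fin d) (Fin r) ℝ} (hB : B ∈ Stiefel d r) :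
    fnorm B = Real.sqrt r := by
  have h := fnorm_sq B
  rw [hB, trace_one, Fintype.card_fin] at h
  rw [← h]
  exact (Real.sqrt_sq (Real.sqrt_nonneg _)).symm

lemma mul_mem_Stiefel {G : Matrix (Fin d) (Fin d) ℝ} (hG : Gᵀ * G = 1)
    {B : Matrix (Fin d) (Fin r) ℝ} (hB : B ∈ Stiefel d r) : G * B ∈ Stiefel d r := by
  change (G * B)ᵀ * (G * B) = 1
  rw [transpose_mul, Matrix.mul_assoc, ← Matrix.mul_assoc Gᵀ, hG, Matrix.one_mul]
  exact hB

variable {B S : Matrix (Fin d) (Fin r) ℝ}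

lemma isSymm_mul_transpose_of_isMaxOn (hB : B ∈ Stiefel d r)
    (hmax : IsMaxOn (ip · S) (Stiefel d r) B) : (S * Bᵀ).IsSymm := by
  refine isSymm_of_forall_trace_transpose_mul_le fun G hG ↦ ?_
  have h := isMaxOn_iff.mp hmax _ (mul_mem_Stiefel hG hB)
  rwa [ip_eq_trace, ip_eq_trace, transpose_mul, Matrix.mul_assoc, trace_mul_comm Bᵀ,
    trace_mul_comm Bᵀ, Matrix.mul_assoc] at h

lemma transpose_mul_comm_of_isMaxOn (hB : B ∈ Stiefel d r)
    (hmax : IsMaxOn (ip · S) (Stiefel d r) B) : Sᵀ * B = Bᵀ * S := by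
  have hsym : B * Sᵀ = S * Bᵀ := by
    simpa using (isSymm_mul_transpose_of_isMaxOn hB hmax).eq
  have hB' : Bᵀ * B = 1 := hB
  calc Sᵀ * B = Bᵀ * (B * Sᵀ) * B := by rw [← Matrix.mul_assoc, hB', Matrix.one_mul]
    _ = Bᵀ * S := by rw [hsym, Matrix.mul_assoc, Matrix.mul_assoc, hB', Matrix.mul_one]

lemma eq_mul_transpose_mul_of_isMaxOn (hB : B ∈ Stiefel d r)
    (hmax : IsMaxOn (ip · S) (Stiefel d r) B) : B * (Bᵀ * S) = S := by
  have hsym : B * Sᵀ = S * Bᵀ := by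
    simpa using (isSymm_mul_transpose_of_isMaxOn hB hmax).eq
  have hB' : Bᵀ * B = 1 := hB
  rw [← transpose_mul_comm_of_isMaxOn hB hmax, ← Matrix.mul_assoc, hsym, Matrix.mul_assoc, hB',
    Matrix.mul_one]

lemma transpose_mul_sub_of_mem_Stiefel {x : Matrix (Fin d) (Fin r) ℝ} (hx : x ∈ Stiefel d r)
    (hB : B ∈ Stiefel d r) : (x - B)ᵀ * (x - B) = (2 : ℝ) • 1 - (xᵀ * B + Bᵀ * x) := by
  have hx' : xᵀ * x = 1 := hx
  have hB' : Bᵀ * B = 1 := hB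
  rw [transpose_sub, Matrix.sub_mul, Matrix.mul_sub, Matrix.mul_sub, hx', hB', two_smul]
  abel

lemma mul_sum_transpose_mul_sub_eq {ι : Type*} [Fintype ι] {x : ι → Matrix (Fin d) (Fin r) ℝ}
    (hx : ∀ i, x i ∈ Stiefel d r) (hB : B ∈ Stiefel d r)
    (hmax : IsMaxOn (ip · (∑ i, x i)) (Stiefel d r) B) :
    B * ∑ i, (x i - B)ᵀ * (x i - B) = (2 * Fintype.card ι : ℝ) • B - (2 : ℝ) • ∑ i, x i := by
  have hgram : ∑ i, (x i - B)ᵀ * (x i - B) =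
      (2 * Fintype.card ι : ℝ) • 1 - (2 : ℝ) • (Bᵀ * ∑ i, x i) := by
    simp only [transpose_mul_sub_of_mem_Stiefel (hx _) hB, Finset.sum_sub_distrib,
      Finset.sum_add_distrib, Finset.sum_const, Finset.card_univ, ← Matrix.sum_mul,
      ← Matrix.mul_sum, ← transpose_sum, transpose_mul_comm_of_isMaxOn hB hmax]
    rw [← Nat.cast_smul_eq_nsmul ℝ, smul_smul, two_smul, mul_comm]
  rw [hgram, Matrix.mul_sub, Matrix.mul_smul, Matrix.mul_smul, Matrix.mul_one,
    eq_mul_transpose_mul_of_isMaxOn hB hmax]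

end Stiefel

theorem stmt1_general {N d r : ℕ} (hN : 0 < N)
    (x : Fin N → Matrix (Fin d) (Fin r) ℝ) (hx : ∀ i, x i ∈ Stiefel d r)
    (xhat : Matrix (Fin d) (Fin r) ℝ) (hxhat : xhat = ((N : ℝ))⁻¹ • ∑ i, x i)
    (xbar : Matrix (Fin d) (Fin r) ℝ) (hmem : xbar ∈ Stiefel d r)
    (hmax : ∀ y ∈ Stiefel d r, ip y (∑ i, x i) ≤ ip xbar (∑ i, x i)) :
    fnorm (xbar - xhat) ≤ (2 * Real.sqrt r / (N : ℝ)) * ∑ i, fnorm (x i - xbar) ^ 2 := by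
  have hNpos : (0 : ℝ) < N := by exact_mod_cast hN
  have hgram := mul_sum_transpose_mul_sub_eq hx hmem (isMaxOn_iff.mpr hmax)
  rw [Fintype.card_fin] at hgram
  have hdiff : xbar - xhat = (2 * N : ℝ)⁻¹ • (xbar * ∑ i, (x i - xbar)ᵀ * (x i - xbar)) := by
    rw [hgram, hxhat, smul_sub, smul_smul, smul_smul, inv_mul_cancel₀ (by positivity), one_smul]
    congr 2
    field_simp
  calc fnorm (xbar - xhat)
      ≤ (2 * N : ℝ)⁻¹ * (fnorm xbar * ∑ i, fnorm (x i - xbar) ^ 2) := by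
        simp only [fnorm_eq_norm, hdiff, norm_smul, Real.norm_eq_abs,
          abs_of_pos (by positivity : 0 < (2 * (N : ℝ))⁻¹)]
        gcongr
        exact (frobenius_norm_mul _ _).trans
          (mul_le_mul_of_nonneg_left (frobenius_norm_sum_transpose_mul_self_le _) (by positivity))
    _ ≤ (2 * Real.sqrt r / (N : ℝ)) * ∑ i, fnorm (x i - xbar) ^ 2 := by
        rw [fnorm_of_mem_Stiefel hmem, ← mul_assoc]
        gcongr
        rw [div_eq_mul_inv, mul_inv]
        nlinarith [Real.sqrt_nonneg r, inv_pos.mpr hNpos]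

theorem stmt1 {N d r : ℕ} (hN : 0 < N)
    (x : Fin N → Matrix (Fin d) (Fin r) ℝ) (hx : ∀ i, x i ∈ Stiefel d r)
    (xhat : Matrix (Fin d) (Fin r) ℝ) (hxhat : xhat = ((N : ℝ))⁻¹ • ∑ i, x i)
    (xbar : Matrix (Fin d) (Fin r) ℝ) (hmem : xbar ∈ Stiefel d r)
    (hmax : ∀ y ∈ Stiefel d r, ip y (∑ i, x i) ≤ ip xbar (∑ i, x i))
    (hsum : ∑ i, fnorm (x i - xbar) ^ 2 ≤ (N : ℝ) / 2) :
    fnorm (xbar - xhat) ≤ (2 * Real.sqrt r / (N : ℝ)) * ∑ i, fnorm (x i - xbar) ^ 2 :=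
  stmt1_general hN x hx xhat hxhat xbar hmem hmax
end

section
/- For x ∈ St(d,r), ξ in the tangent space T_x (i.e., xᵀξ + ξᵀx = 0), and any y ∈ St(d,r), the polar retraction Retr_x(ξ) = (x+ξ)(I_r + ξᵀξ)^{-1/2} satisfies ‖Retr_x(ξ) − y‖_F ≤ ‖x + ξ − y‖_F. -/
open Matrix BigOperators Finset

/- The matrix square root of a positive semidefinite matrix, as defined in Mathlib (Dec 2024),
removed since; restated here with its old definition. -/
open scoped ComplexOrder in
noncomputable def Matrix.PosSemidef.sqrt {n 𝕜 : Type*} [Fintype n] [RCLike 𝕜] [DecidableEq n]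
    {A : Matrix n n 𝕜} (hA : A.PosSemidef) : Matrix n n 𝕜 :=
  hA.1.eigenvectorUnitary.1 * diagonal ((↑) ∘ (√·) ∘ hA.1.eigenvalues) *
  (star hA.1.eigenvectorUnitary : Matrix n n 𝕜)

/-!
Write `x + ξ = Q S` with `S = (I + ξᵀξ)^{1/2}` and `Q = Retr_x(ξ)`. Tangency gives
`(x + ξ)ᵀ(x + ξ) = I + ξᵀξ`, so `Q` lies on the Stiefel manifold and `S ≥ I`.
For `Q, y` on the Stiefel manifold and symmetric `S`,
`‖QS - y‖² = ‖Q - y‖² + tr((Q - y)ᵀ(Q - y)(S - I)) + ‖S - I‖²`,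
and the middle term is the trace of a product of two positive semidefinite matrices, hence `≥ 0`.
-/

open scoped MatrixOrder ComplexOrder

namespace Matrix

lemma transpose_eq_self_of_one_le {n : Type*} [DecidableEq n] {S : Matrix n n ℝ} (h : 1 ≤ S) :
    Sᵀ = S :=
  (isHermitian_iff_isSymm.mp (PosSemidef.one.nonneg.trans h).posSemidef.isHermitian).eq

variable {n 𝕜 : Type*} [Fintype n] [DecidableEq n] [RCLike 𝕜] {A : Matrix n n 𝕜}

lemma PosSemidef.sqrt_eq_cfc (hA : A.PosSemidef) : hA.sqrt = cfc Real.sqrt A := by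
  rw [hA.1.cfc_eq, IsHermitian.cfc, Unitary.conjStarAlgAut_apply]; rfl

lemma PosSemidef.sqrt_mul_self (hA : A.PosSemidef) : hA.sqrt * hA.sqrt = A := by
  rw [hA.sqrt_eq_cfc, ← cfc_mul ..]
  conv_rhs => rw [← cfc_id' ℝ A]
  exact cfc_congr fun x hx => Real.mul_self_sqrt (spectrum_nonneg_of_nonneg hA.nonneg hx)

lemma PosSemidef.one_le_sqrt (hA : A.PosSemidef) (h : 1 ≤ A) : 1 ≤ hA.sqrt := by
  rw [hA.sqrt_eq_cfc, one_le_cfc_iff Real.sqrt A]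
  rw [CFC.one_le_iff (R := ℝ) A] at h
  exact fun x hx => Real.one_le_sqrt.mpr (h x hx)

lemma PosSemidef.trace_mul_nonneg {B : Matrix n n 𝕜} (hA : A.PosSemidef) (hB : B.PosSemidef) :
    0 ≤ (A * B).trace := by
  obtain ⟨C, rfl⟩ := CStarAlgebra.nonneg_iff_eq_star_mul_self.mp hB.nonneg
  rw [← Matrix.mul_assoc, trace_mul_comm, ← Matrix.mul_assoc, star_eq_conjTranspose]
  exact (hA.mul_mul_conjTranspose_same C).trace_nonneg

lemma isUnit_det_of_one_le {S : Matrix n n 𝕜} (h : 1 ≤ S) : IsUnit S.det := by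
  rw [← isUnit_iff_isUnit_det]
  simpa using (PosDef.one.add_posSemidef (le_iff.mp h)).isUnit

end Matrix

section Stiefel

variable {d r : ℕ}

lemma fnorm_eq_sqrt_trace (A : Matrix (Fin d) (Fin r) ℝ) : fnorm A = √(Aᵀ * A).trace := by
  simp only [fnorm, trace, Matrix.diag, mul_apply, transpose_apply, ← sq]
  rw [Finset.sum_comm]

lemma trace_transpose_mul_self_mul_sub (Q y : Matrix (Fin d) (Fin r) ℝ)
    {S : Matrix (Fin r) (Fin r) ℝ} (hQ : Q ∈ Stiefel d r) (hy : y ∈ Stiefel d r)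
    (hS : Sᵀ = S) :
    ((Q * S - y)ᵀ * (Q * S - y)).trace = ((Q - y)ᵀ * (Q - y)).trace
      + ((Q - y)ᵀ * (Q - y) * (S - 1)).trace + ((S - 1)ᵀ * (S - 1)).trace := by
  have hQ' : Qᵀ * Q = 1 := hQ
  have hy' : yᵀ * y = 1 := hy
  have e₁ : (Q * S - y)ᵀ * (Q * S - y)
      = S * (Qᵀ * Q) * S - S * (Qᵀ * y) - yᵀ * Q * S + yᵀ * y := by
    simp only [transpose_sub, transpose_mul, hS, Matrix.sub_mul, Matrix.mul_sub, Matrix.mul_assoc]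
    abel
  have e₂ : (Q - y)ᵀ * (Q - y) = Qᵀ * Q - Qᵀ * y - yᵀ * Q + yᵀ * y := by
    simp only [transpose_sub, Matrix.sub_mul, Matrix.mul_sub]
    abel
  have e₃ : (S - 1)ᵀ * (S - 1) = S * S - S - S + 1 := by
    simp only [transpose_sub, transpose_one, hS, Matrix.sub_mul, Matrix.mul_sub, Matrix.mul_one,
      Matrix.one_mul]
    abel
  rw [e₁, e₂, e₃, hQ', hy', Matrix.mul_one]
  simp only [Matrix.sub_mul, Matrix.add_mul, Matrix.mul_sub, Matrix.one_mul, Matrix.mul_one,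
    trace_sub, trace_add, trace_mul_comm (Qᵀ * y) S]
  ring

lemma fnorm_sub_le_fnorm_mul_sub {Q y : Matrix (Fin d) (Fin r) ℝ} {S : Matrix (Fin r) (Fin r) ℝ}
    (hQ : Q ∈ Stiefel d r) (hy : y ∈ Stiefel d r) (hS : 1 ≤ S) :
    fnorm (Q - y) ≤ fnorm (Q * S - y) := by
  rw [fnorm_eq_sqrt_trace, fnorm_eq_sqrt_trace,
    trace_transpose_mul_self_mul_sub Q y hQ hy (transpose_eq_self_of_one_le hS)]
  gcongr
  have h₁ := (posSemidef_conjTranspose_mul_self (Q - y)).trace_mul_nonneg (le_iff.mp hS)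
  have h₂ := (posSemidef_conjTranspose_mul_self (S - 1)).trace_nonneg
  simp only [conjTranspose_eq_transpose_of_trivial] at h₁ h₂
  linarith

lemma transpose_mul_self_add_of_tangent {x ξ : Matrix (Fin d) (Fin r) ℝ} (hx : x ∈ Stiefel d r)
    (hξ : xᵀ * ξ + ξᵀ * x = 0) : (x + ξ)ᵀ * (x + ξ) = 1 + ξᵀ * ξ := by
  have hx' : xᵀ * x = 1 := hx
  calc (x + ξ)ᵀ * (x + ξ) = xᵀ * x + (xᵀ * ξ + ξᵀ * x) + ξᵀ * ξ := by
        simp only [transpose_add, Matrix.add_mul, Matrix.mul_add]; abel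
    _ = 1 + ξᵀ * ξ := by rw [hx', hξ, add_zero]

lemma mul_inv_mem_stiefel {A : Matrix (Fin d) (Fin r) ℝ} {S : Matrix (Fin r) (Fin r) ℝ}
    (hS : Sᵀ = S) (hSu : IsUnit S.det) (hA : Aᵀ * A = S * S) : A * S⁻¹ ∈ Stiefel d r := by
  show (A * S⁻¹)ᵀ * (A * S⁻¹) = 1
  rw [transpose_mul, transpose_nonsing_inv, hS, Matrix.mul_assoc, ← Matrix.mul_assoc Aᵀ, hA,
    mul_nonsing_inv_cancel_right S S hSu, nonsing_inv_mul _ hSu]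

end Stiefel

theorem stmt3 {d r : ℕ} (x ξ y : Matrix (Fin d) (Fin r) ℝ)
    (hx : x ∈ Stiefel d r) (hy : y ∈ Stiefel d r)
    (hξ : xᵀ * ξ + ξᵀ * x = 0) :
    fnorm ((x + ξ) *
        ((Matrix.PosSemidef.add Matrix.PosSemidef.one (Matrix.posSemidef_conjTranspose_mul_self ξ)).sqrt)⁻¹ - y)
      ≤ fnorm (x + ξ - y) := by
  set hP := PosSemidef.add PosSemidef.one (posSemidef_conjTranspose_mul_self ξ)
  set S := hP.sqrt
  have hS : 1 ≤ S :=
    hP.one_le_sqrt (le_add_of_nonneg_right (posSemidef_conjTranspose_mul_self ξ).nonneg)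
  have hSu : IsUnit S.det := isUnit_det_of_one_le hS
  have hQ : (x + ξ) * S⁻¹ ∈ Stiefel d r := by
    refine mul_inv_mem_stiefel (transpose_eq_self_of_one_le hS) hSu ?_
    rw [transpose_mul_self_add_of_tangent hx hξ, hP.sqrt_mul_self,
      conjTranspose_eq_transpose_of_trivial]
  calc fnorm ((x + ξ) * S⁻¹ - y)
      ≤ fnorm ((x + ξ) * S⁻¹ * S - y) := fnorm_sub_le_fnorm_mul_sub hQ hy hS
    _ = fnorm (x + ξ - y) := by rw [nonsing_inv_mul_cancel_right S (x + ξ) hSu]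
end

section
/- Consequently, for x, y ∈ St(d,r), ‖P_{T_x}(x − y) − (x − y)‖_F ≤ (1/2)‖x‖₂ · ‖x − y‖_F², where ‖x‖₂ = 1; hence ‖P_{T_x}(x−y) − (x−y)‖_F ≤ (1/2)‖x−y‖_F². -/
open Matrix BigOperators Finset

/-! For `x, y` on the Stiefel manifold, `xᵀ(x - y) + (x - y)ᵀx = (x - y)ᵀ(x - y)`, so the residual
of the tangent projection is `-½ x (x - y)ᵀ(x - y)`. Left multiplication by `x` preserves the
Frobenius norm (the factor `‖x‖₂ = 1`), and `‖AᵀA‖_F ≤ ‖A‖_F²` by submultiplicativity. -/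

attribute [local instance] Matrix.frobeniusNormedAddCommGroup Matrix.frobeniusNormedSpace

section Frobenius

variable {l m n : Type*} [Fintype l] [Fintype m] [Fintype n]

lemma fnorm_eq_frobenius_norm {d r : ℕ} (A : Matrix (Fin d) (Fin r) ℝ) : fnorm A = ‖A‖ := by
  simp [fnorm, frobenius_norm_def, Real.sqrt_eq_rpow]

lemma frobenius_norm_sq_eq_trace_transpose_mul_self (A : Matrix m n ℝ) :
    ‖A‖ ^ 2 = (Aᵀ * A).trace := by
  rw [frobenius_norm_def, ← Real.sqrt_eq_rpow, Real.sq_sqrt (by positivity), Finset.sum_comm]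
  simp [Matrix.trace, Matrix.mul_apply, sq]

lemma frobenius_norm_mul_of_transpose_mul_self_eq_one [DecidableEq n] {Q : Matrix m n ℝ}
    (hQ : Qᵀ * Q = 1) (M : Matrix n l ℝ) : ‖Q * M‖ = ‖M‖ := by
  rw [← sq_eq_sq₀ (norm_nonneg _) (norm_nonneg _), frobenius_norm_sq_eq_trace_transpose_mul_self,
    frobenius_norm_sq_eq_trace_transpose_mul_self, transpose_mul, Matrix.mul_assoc,
    ← Matrix.mul_assoc Qᵀ, hQ, Matrix.one_mul]

lemma frobenius_norm_transpose_mul_self_le (A : Matrix m n ℝ) : ‖Aᵀ * A‖ ≤ ‖A‖ ^ 2 := by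
  simpa [sq, frobenius_norm_transpose] using frobenius_norm_mul Aᵀ A

end Frobenius

lemma transpose_mul_sub_add_sub_transpose_mul {m n R : Type*} [Fintype m] [Fintype n]
    [DecidableEq n] [CommRing R] {x y : Matrix m n R} (hx : xᵀ * x = 1) (hy : yᵀ * y = 1) :
    xᵀ * (x - y) + (x - y)ᵀ * x = (x - y)ᵀ * (x - y) := by
  simp only [transpose_sub, Matrix.mul_sub, Matrix.sub_mul, hx, hy]
  abel

theorem stmt6 {d r : ℕ} (x y : Matrix (Fin d) (Fin r) ℝ)
    (hx : x ∈ Stiefel d r) (hy : y ∈ Stiefel d r) :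
    fnorm (((x - y) - ((1 : ℝ) / 2) • (x * (xᵀ * (x - y) + (x - y)ᵀ * x))) - (x - y))
      ≤ (1 / 2) * fnorm (x - y) ^ 2 := by
  have hres : ((x - y) - ((1 : ℝ) / 2) • (x * (xᵀ * (x - y) + (x - y)ᵀ * x))) - (x - y)
      = -(((1 : ℝ) / 2) • (x * ((x - y)ᵀ * (x - y)))) := by
    rw [transpose_mul_sub_add_sub_transpose_mul hx hy]
    abel
  rw [hres, fnorm_eq_frobenius_norm, fnorm_eq_frobenius_norm, norm_neg, norm_smul,
    frobenius_norm_mul_of_transpose_mul_self_eq_one hx, Real.norm_of_nonneg (by norm_num)]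
  gcongr
  exact frobenius_norm_transpose_mul_self_le _
end

section
/- Let W ∈ ℝ^{N×N} be symmetric doubly stochastic with eigenvalues in (−1,1] and 1 a simple eigenvalue (graph connected). Set μ = 1 − λ₂(W) and L = 1 − λ_N(W), where λ₂, λ_N are the second largest and smallest eigenvalues. Then for any x ∈ (ℝ^{d×r})^N, with x̂ = (1/N)∑_i x_i, x̂ᵥ = (x̂,...,x̂), and g(x) := ((I_N − W) ⊗ I)x (i.e., g_i = x_i − ∑_j W_{ij}x_j): ⟨x − x̂ᵥ, g(x)⟩ ≥ (μL/(μ+L))‖x − x̂ᵥ‖_F² + (1/(μ+L))‖g(x)‖_F². -/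
open Matrix BigOperators Finset

/-! Expanding in an orthonormal eigenbasis of the Laplacian `1 - W`, an eigenvalue `s` with
coefficient `c` contributes `(μ + L) s c² - μ L c² - s² c² = (s - μ) (L - s) c²`, which is
nonnegative once `s ∈ [μ, L]`. Each entry of `x - x̂` has mean zero, and because `λ₂ < 1` the
eigenvectors of `W` for the eigenvalue `1` are constant, so only eigenvalues `s = 1 - t` with
`t ∈ [λ_N, λ₂]` occur. Summing this scalar inequality over the entries gives the claim. -/

theorem OrthonormalBasis.sum_dotProduct_mul_dotProduct {ι n : Type*} [Fintype ι] [Fintype n]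
    (b : OrthonormalBasis ι ℝ (EuclideanSpace ℝ n)) (v w : n → ℝ) :
    ∑ k, (⇑(b k) ⬝ᵥ v) * (⇑(b k) ⬝ᵥ w) = v ⬝ᵥ w := by
  simpa [EuclideanSpace.inner_eq_star_dotProduct, dotProduct_comm] using
    b.sum_inner_mul_inner (WithLp.toLp 2 v) (WithLp.toLp 2 w)

namespace Matrix.IsHermitian

variable {n : Type*} [Fintype n] [DecidableEq n] {A : Matrix n n ℝ} (hA : A.IsHermitian)
include hA

theorem eigenvectorBasis_dotProduct_mulVec (k : n) (v : n → ℝ) :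
    ⇑(hA.eigenvectorBasis k) ⬝ᵥ (A *ᵥ v) = hA.eigenvalues k * (⇑(hA.eigenvectorBasis k) ⬝ᵥ v) := by
  rw [dotProduct_mulVec, ← mulVec_transpose, ← conjTranspose_eq_transpose_of_trivial, hA.eq,
    hA.mulVec_eigenvectorBasis, smul_dotProduct, smul_eq_mul]

theorem mul_dotProduct_add_le_of_eigenvalues_mem_Icc {v : n → ℝ} {lo hi : ℝ}
    (h : ∀ b : n → ℝ, ∀ s, A *ᵥ b = s • b → b ⬝ᵥ v ≠ 0 → s ∈ Set.Icc lo hi) :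
    lo * hi * (v ⬝ᵥ v) + (A *ᵥ v) ⬝ᵥ (A *ᵥ v) ≤ (lo + hi) * (v ⬝ᵥ (A *ᵥ v)) := by
  have parseval := hA.eigenvectorBasis.sum_dotProduct_mul_dotProduct
  rw [← parseval v v, ← parseval (A *ᵥ v), ← parseval v (A *ᵥ v), mul_sum, mul_sum,
    ← sum_add_distrib]
  refine sum_le_sum fun k _ => ?_
  rw [hA.eigenvectorBasis_dotProduct_mulVec]
  set c := ⇑(hA.eigenvectorBasis k) ⬝ᵥ v
  by_cases hc : c = 0
  · simp [hc]
  obtain ⟨hlo, hhi⟩ := h _ _ (hA.mulVec_eigenvectorBasis k) hc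
  nlinarith [mul_nonneg (mul_nonneg (sub_nonneg.2 hlo) (sub_nonneg.2 hhi)) (sq_nonneg c)]

end Matrix.IsHermitian

section Stochastic

variable {n : Type*} [Fintype n] {W : Matrix n n ℝ}

theorem mulVec_one_of_sum_eq_one (hrow : ∀ i, ∑ j, W i j = 1) : W *ᵥ 1 = 1 := by
  ext i
  simpa [mulVec, dotProduct] using hrow i

theorem sum_mulVec_of_isSymm (hsymm : W.IsSymm) (hrow : ∀ i, ∑ j, W i j = 1) (w : n → ℝ) :
    ∑ i, (W *ᵥ w) i = ∑ i, w i := by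
  rw [← one_dotProduct, dotProduct_mulVec, ← mulVec_transpose, hsymm.eq,
    mulVec_one_of_sum_eq_one hrow, one_dotProduct]

theorem sum_eq_zero_of_mulVec_eq_smul (hsymm : W.IsSymm) (hrow : ∀ i, ∑ j, W i j = 1)
    {b : n → ℝ} {t : ℝ} (hb : W *ᵥ b = t • b) (ht : t ≠ 1) : ∑ i, b i = 0 := by
  have h := sum_mulVec_of_isSymm hsymm hrow b
  simp only [hb, Pi.smul_apply, smul_eq_mul, ← mul_sum] at h
  have : (t - 1) * ∑ i, b i = 0 := by rw [sub_mul, h, one_mul, sub_self]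
  exact (mul_eq_zero.1 this).resolve_left (sub_ne_zero.2 ht)

theorem dotProduct_eq_zero_of_mulVec_eq_self (hrow : ∀ i, ∑ j, W i j = 1)
    (hsimple : ∀ w : n → ℝ, ∑ i, w i = 0 → W *ᵥ w = w → w = 0)
    {b v : n → ℝ} (hb : W *ᵥ b = b) (hv : ∑ i, v i = 0) : b ⬝ᵥ v = 0 := by
  rcases isEmpty_or_nonempty n with hn | hn
  · simp [dotProduct]
  set a := (∑ i, b i) / Fintype.card n
  have hconst : b - a • 1 = 0 := by
    refine hsimple _ ?_ ?_
    · have hcard : (Fintype.card n : ℝ) ≠ 0 := Nat.cast_ne_zero.2 Fintype.card_ne_zero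
      simp [sum_sub_distrib, a, mul_div_cancel₀ _ hcard]
    · rw [mulVec_sub, mulVec_smul, hb, mulVec_one_of_sum_eq_one hrow]
  rw [sub_eq_zero.1 hconst, smul_dotProduct, one_dotProduct, hv, smul_zero]

theorem mem_Icc_of_mulVec_eq_smul (hsymm : W.IsSymm) (hrow : ∀ i, ∑ j, W i j = 1) {lam2 lamN : ℝ}
    (hlam2 : IsGreatest {t : ℝ | ∃ v : n → ℝ, v ≠ 0 ∧ (∑ i, v i) = 0 ∧ W.mulVec v = t • v} lam2)
    (hlamN : IsLeast {t : ℝ | ∃ v : n → ℝ, v ≠ 0 ∧ W.mulVec v = t • v} lamN)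
    (hconn : lam2 < 1) {v b : n → ℝ} {t : ℝ} (hv : ∑ i, v i = 0) (hb : W *ᵥ b = t • b)
    (hbv : b ⬝ᵥ v ≠ 0) : t ∈ Set.Icc lamN lam2 := by
  have hb0 : b ≠ 0 := by rintro rfl; simp at hbv
  refine ⟨hlamN.2 ⟨b, hb0, hb⟩, ?_⟩
  by_cases ht : t = 1
  · have hsimple : ∀ w : n → ℝ, ∑ i, w i = 0 → W *ᵥ w = w → w = 0 := fun w hw hWw => by
      by_contra hw0
      exact absurd (hlam2.2 ⟨w, hw0, hw, by rw [hWw, one_smul]⟩) (not_le.2 hconn)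
    subst ht
    exact absurd (dotProduct_eq_zero_of_mulVec_eq_self hrow hsimple (by rw [hb, one_smul]) hv) hbv
  · exact hlam2.2 ⟨b, hb0, sum_eq_zero_of_mulVec_eq_smul hsymm hrow hb ht, hb⟩

theorem mul_dotProduct_add_le_of_sum_eq_zero [DecidableEq n] (hsymm : W.IsSymm)
    (hrow : ∀ i, ∑ j, W i j = 1) {lam2 lamN : ℝ}
    (hlam2 : IsGreatest {t : ℝ | ∃ v : n → ℝ, v ≠ 0 ∧ (∑ i, v i) = 0 ∧ W.mulVec v = t • v} lam2)
    (hlamN : IsLeast {t : ℝ | ∃ v : n → ℝ, v ≠ 0 ∧ W.mulVec v = t • v} lamN)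
    (hconn : lam2 < 1) {v : n → ℝ} (hv : ∑ i, v i = 0) :
    (1 - lam2) * (1 - lamN) * (v ⬝ᵥ v) + (v - W *ᵥ v) ⬝ᵥ (v - W *ᵥ v) ≤
      ((1 - lam2) + (1 - lamN)) * (v ⬝ᵥ (v - W *ᵥ v)) := by
  have hL : (1 - W).IsHermitian :=
    isHermitian_one.sub (isHermitian_iff_isSelfAdjoint.mpr hsymm)
  have hLv : (1 - W) *ᵥ v = v - W *ᵥ v := by rw [sub_mulVec, one_mulVec]
  rw [← hLv]
  refine hL.mul_dotProduct_add_le_of_eigenvalues_mem_Icc fun b s hb hbv => ?_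
  have hWb : W *ᵥ b = (1 - s) • b := by
    rw [sub_mulVec, one_mulVec] at hb
    rw [sub_smul, one_smul, ← hb, sub_sub_cancel]
  obtain ⟨hlo, hhi⟩ := mem_Icc_of_mulVec_eq_smul hsymm hrow hlam2 hlamN hconn hv hWb hbv
  constructor <;> linarith

end Stochastic

theorem sum_sub_inv_card_smul_sum {ι M : Type*} [Fintype ι] [AddCommGroup M] [Module ℝ M]
    (x : ι → M) : ∑ i, (x i - (Fintype.card ι : ℝ)⁻¹ • ∑ j, x j) = 0 := by
  rcases isEmpty_or_nonempty ι with hι | hι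
  · simp
  rw [sum_sub_distrib, sum_const, card_univ, ← Nat.cast_smul_eq_nsmul ℝ, smul_inv_smul₀
    (Nat.cast_ne_zero.2 Fintype.card_ne_zero), sub_self]

theorem sub_sum_smul_eq_sub_sum_smul_sub {ι M : Type*} [Fintype ι] [AddCommGroup M] [Module ℝ M]
    {W : Matrix ι ι ℝ} (hrow : ∀ i, ∑ j, W i j = 1) (x : ι → M) (c : M) (i : ι) :
    x i - ∑ j, W i j • x j = (x i - c) - ∑ j, W i j • (x j - c) := by
  simp only [smul_sub, sum_sub_distrib, ← sum_smul, hrow, one_smul, sub_sub_sub_cancel_right]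

theorem mul_sum_fnorm_sq_add_le_of_forall_entry {ι : Type*} [Fintype ι] {d r : ℕ}
    (X Y : ι → Matrix (Fin d) (Fin r) ℝ) {c D : ℝ}
    (h : ∀ a b, c * ∑ i, X i a b ^ 2 + ∑ i, Y i a b ^ 2 ≤ D * ∑ i, X i a b * Y i a b) :
    c * ∑ i, fnorm (X i) ^ 2 + ∑ i, fnorm (Y i) ^ 2 ≤ D * ∑ i, ip (X i) (Y i) := by
  have hfnorm (A : Matrix (Fin d) (Fin r) ℝ) : fnorm A ^ 2 = ∑ a, ∑ b, A a b ^ 2 :=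
    Real.sq_sqrt (by positivity)
  have hswap (F : ι → Fin d → Fin r → ℝ) : ∑ i, ∑ a, ∑ b, F i a b = ∑ a, ∑ b, ∑ i, F i a b := by
    rw [sum_comm]
    exact sum_congr rfl fun a _ => sum_comm
  simp only [hfnorm, ip, hswap, mul_sum, ← sum_add_distrib]
  exact sum_le_sum fun a _ => sum_le_sum fun b _ => by
    simpa only [mul_sum, sum_add_distrib] using h a b

theorem stmt9_general {N d r : ℕ} (W : Matrix (Fin N) (Fin N) ℝ)
    (hsymm : W.IsSymm) (hrow : ∀ i, ∑ j, W i j = 1)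
    (lam2 lamN : ℝ)
    (hlam2 : IsGreatest
      {t : ℝ | ∃ v : Fin N → ℝ, v ≠ 0 ∧ (∑ i, v i) = 0 ∧ W.mulVec v = t • v} lam2)
    (hlamN : IsLeast {t : ℝ | ∃ v : Fin N → ℝ, v ≠ 0 ∧ W.mulVec v = t • v} lamN)
    (hconn : lam2 < 1)
    (x : Fin N → Matrix (Fin d) (Fin r) ℝ)
    (xhat : Matrix (Fin d) (Fin r) ℝ) (hxhat : xhat = ((N : ℝ))⁻¹ • ∑ i, x i)
    (g : Fin N → Matrix (Fin d) (Fin r) ℝ)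
    (hg : ∀ i, g i = x i - ∑ j, W i j • x j) :
    ∑ i, ip (x i - xhat) (g i) ≥
      ((1 - lam2) * (1 - lamN) / ((1 - lam2) + (1 - lamN))) * ∑ i, fnorm (x i - xhat) ^ 2
        + (1 / ((1 - lam2) + (1 - lamN))) * ∑ i, fnorm (g i) ^ 2 := by
  have hden : 0 < (1 - lam2) + (1 - lamN) := by
    obtain ⟨v, hv, -, hWv⟩ := hlam2.1
    linarith [hlamN.2 ⟨v, hv, hWv⟩]
  have hmean : ∑ i, (x i - xhat) = 0 := by
    simpa [hxhat] using sum_sub_inv_card_smul_sum x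
  have hcol (a : Fin d) (b : Fin r) :=
    mul_dotProduct_add_le_of_sum_eq_zero hsymm hrow hlam2 hlamN hconn
      (v := fun i => (x i - xhat) a b) (by simpa [Matrix.sum_apply] using congr($hmean a b))
  have hg' (i : Fin N) : g i = (x i - xhat) - ∑ j, W i j • (x j - xhat) := by
    rw [hg, sub_sum_smul_eq_sub_sum_smul_sub hrow x xhat]
  have key := mul_sum_fnorm_sq_add_le_of_forall_entry (fun i => x i - xhat) g
    (c := (1 - lam2) * (1 - lamN)) (D := (1 - lam2) + (1 - lamN)) fun a b => by
      simpa [dotProduct, mulVec, hg', Matrix.sum_apply, sq] using hcol a b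
  rw [ge_iff_le, div_mul_eq_mul_div, one_div_mul_eq_div, ← add_div, div_le_iff₀ hden]
  linarith

theorem stmt9 {N d r : ℕ} (hN : 0 < N) (W : Matrix (Fin N) (Fin N) ℝ)
    (hsymm : W.IsSymm) (hnn : ∀ i j, 0 ≤ W i j) (hrow : ∀ i, ∑ j, W i j = 1)
    (heig : ∀ t : ℝ, (∃ v : Fin N → ℝ, v ≠ 0 ∧ W.mulVec v = t • v) → -1 < t ∧ t ≤ 1)
    (lam2 lamN : ℝ)
    (hlam2 : IsGreatest
      {t : ℝ | ∃ v : Fin N → ℝ, v ≠ 0 ∧ (∑ i, v i) = 0 ∧ W.mulVec v = t • v} lam2)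
    (hlamN : IsLeast {t : ℝ | ∃ v : Fin N → ℝ, v ≠ 0 ∧ W.mulVec v = t • v} lamN)
    (hconn : lam2 < 1)
    (x : Fin N → Matrix (Fin d) (Fin r) ℝ)
    (xhat : Matrix (Fin d) (Fin r) ℝ) (hxhat : xhat = ((N : ℝ))⁻¹ • ∑ i, x i)
    (g : Fin N → Matrix (Fin d) (Fin r) ℝ)
    (hg : ∀ i, g i = x i - ∑ j, W i j • x j) :
    ∑ i, ip (x i - xhat) (g i) ≥
      ((1 - lam2) * (1 - lamN) / ((1 - lam2) + (1 - lamN))) * ∑ i, fnorm (x i - xhat) ^ 2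
        + (1 / ((1 - lam2) + (1 - lamN))) * ∑ i, fnorm (g i) ^ 2 :=
  stmt9_general W hsymm hrow lam2 lamN hlam2 hlamN hconn x xhat hxhat g hg
end

section
/- Let W be symmetric doubly stochastic with eigenvalues in (−1,1] and connected (λ₂(W) < 1). Define the Euclidean consensus iteration x_{k+1} = P_{C^N}((W ⊗ I) x_k) where C ⊆ ℝ^{d×r} is a nonempty closed convex set and P_{C^N} applies the projection onto C blockwise. Then with x̂_k the blockwise Euclidean mean of x_k and x̂ᵥ_k its N-fold stacking, ‖x_{k+1} − x̂ᵥ_{k+1}‖_F ≤ σ₂ ‖x_k − x̂ᵥ_k‖_F, where σ₂ is the second largest singular value of W. -/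
open Matrix BigOperators Finset

/-!
Flattening matrices into `EuclideanSpace ℝ (Fin d × Fin r)` turns `fnorm` into a Hilbert-space
norm. There, three facts chain together: the mean `x̂` minimizes `∑ ‖xᵢ - c‖²` over `c`, so it
may be replaced by `c = P x̂`; the projection onto a convex set is nonexpansive, so
`‖P (∑ⱼ Wᵢⱼ xⱼ) - P x̂‖ ≤ ‖∑ⱼ Wᵢⱼ xⱼ - x̂‖`; and since `W` is row stochastic,
`∑ⱼ Wᵢⱼ xⱼ - x̂ = ∑ⱼ Wᵢⱼ (xⱼ - x̂)`, whose coordinates are `W` applied to mean-zero vectors,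
contracted by `σ₂`.
-/

open RealInnerProductSpace

section Projection

variable {F : Type*} [NormedAddCommGroup F] [InnerProductSpace ℝ F] {K : Set F} {P : F → F}

theorem inner_sub_proj_le_zero (hK : Convex ℝ K) (hPmem : ∀ z, P z ∈ K)
    (hPproj : ∀ z, ∀ w ∈ K, ‖z - P z‖ ≤ ‖z - w‖) (z : F) {w : F} (hw : w ∈ K) :
    ⟪z - P z, w - P z⟫ ≤ 0 := by
  refine (norm_eq_iInf_iff_real_inner_le_zero hK (hPmem z)).1 ?_ w hw
  have : Nonempty K := ⟨⟨P z, hPmem z⟩⟩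
  have hbdd : BddBelow (Set.range fun w : K => ‖z - w‖) :=
    ⟨0, by rintro _ ⟨w, rfl⟩; exact norm_nonneg _⟩
  exact le_antisymm (le_ciInf fun w => hPproj z w w.2) (ciInf_le hbdd ⟨P z, hPmem z⟩)

theorem norm_proj_sub_proj_le (hK : Convex ℝ K) (hPmem : ∀ z, P z ∈ K)
    (hPproj : ∀ z, ∀ w ∈ K, ‖z - P z‖ ≤ ‖z - w‖) (z w : F) :
    ‖P z - P w‖ ≤ ‖z - w‖ := by
  have hz := inner_sub_proj_le_zero hK hPmem hPproj z (hPmem w)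
  have hw := inner_sub_proj_le_zero hK hPmem hPproj w (hPmem z)
  have hsq : ‖P z - P w‖ ^ 2 ≤ ⟪z - w, P z - P w⟫ := by
    have hid : ⟪z - w, P z - P w⟫
        = ‖P z - P w‖ ^ 2 - ⟪z - P z, P w - P z⟫ - ⟪w - P w, P z - P w⟫ := by
      rw [← real_inner_self_eq_norm_sq]
      simp only [inner_sub_left, inner_sub_right, real_inner_comm]
      ring
    linarith
  have hcs := real_inner_le_norm (z - w) (P z - P w)
  nlinarith [norm_nonneg (P z - P w), norm_nonneg (z - w)]

end Projection

section Mean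

variable {ι : Type*} [Fintype ι]

theorem sum_sub_mean_eq_zero {M : Type*} [AddCommGroup M] [Module ℝ M] (u : ι → M) :
    ∑ i, (u i - (Fintype.card ι : ℝ)⁻¹ • ∑ j, u j) = 0 := by
  rcases isEmpty_or_nonempty ι with hι | hι
  · simp
  · rw [sum_sub_distrib, sum_const, card_univ, ← Nat.cast_smul_eq_nsmul ℝ, smul_smul,
      mul_inv_cancel₀ (by positivity), one_smul, sub_self]

variable {F : Type*} [NormedAddCommGroup F] [InnerProductSpace ℝ F]

theorem sum_norm_sub_mean_sq_le_s12 (u : ι → F) (c : F) :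
    ∑ i, ‖u i - (Fintype.card ι : ℝ)⁻¹ • ∑ j, u j‖ ^ 2 ≤ ∑ i, ‖u i - c‖ ^ 2 := by
  set m := (Fintype.card ι : ℝ)⁻¹ • ∑ j, u j
  calc ∑ i, ‖u i - m‖ ^ 2
      ≤ ∑ i, (‖u i - m‖ ^ 2 + 2 * ⟪u i - m, m - c⟫ + ‖m - c‖ ^ 2) := by
        rw [sum_add_distrib, sum_add_distrib, ← mul_sum, ← sum_inner, sum_sub_mean_eq_zero,
          inner_zero_left, mul_zero, add_zero]
        exact le_add_of_nonneg_right (by positivity)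
    _ = ∑ i, ‖u i - c‖ ^ 2 := by
        refine sum_congr rfl fun i _ => ?_
        rw [← norm_add_sq_real, sub_add_sub_cancel]

end Mean

theorem sum_smul_sub_eq_sum_smul_sub {ι M : Type*} [Fintype ι] [AddCommGroup M] [Module ℝ M]
    {w : ι → ℝ} (hw : ∑ j, w j = 1) (x : ι → M) (c : M) :
    ∑ j, w j • x j - c = ∑ j, w j • (x j - c) := by
  simp only [smul_sub, sum_sub_distrib, ← sum_smul, hw, one_smul]

theorem sum_norm_sq_sum_smul_le_of_sum_eq_zero {ι κ : Type*} [Fintype ι] [Fintype κ] (W : Matrix ι ι ℝ) {σ : ℝ}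
    (hσ : ∀ v : ι → ℝ, ∑ i, v i = 0 → ∑ i, (W *ᵥ v) i ^ 2 ≤ σ ^ 2 * ∑ i, v i ^ 2)
    (y : ι → EuclideanSpace ℝ κ) (hy : ∑ i, y i = 0) :
    ∑ i, ‖∑ j, W i j • y j‖ ^ 2 ≤ σ ^ 2 * ∑ i, ‖y i‖ ^ 2 := by
  simp only [EuclideanSpace.norm_sq_eq, Real.norm_eq_abs, sq_abs]
  rw [sum_comm, sum_comm (γ := ι), mul_sum]
  gcongr with k
  have hcol : ∑ j, y j k = 0 := by simpa using congrArg (fun v : EuclideanSpace ℝ κ => v k) hy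
  have hmix : ∀ i, (∑ j, W i j • y j) k = (W *ᵥ fun j => y j k) i := fun i => by
    simp [mulVec, dotProduct]
  simpa only [hmix] using hσ _ hcol

theorem sum_norm_sub_mean_sq_le_of_projected_consensus {ι κ : Type*} [Fintype ι] [Fintype κ]
    {W : Matrix ι ι ℝ} (hrow : ∀ i, ∑ j, W i j = 1) {σ : ℝ}
    (hσ : ∀ v : ι → ℝ, ∑ i, v i = 0 → ∑ i, (W *ᵥ v) i ^ 2 ≤ σ ^ 2 * ∑ i, v i ^ 2)
    {K : Set (EuclideanSpace ℝ κ)} (hK : Convex ℝ K)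
    {P : EuclideanSpace ℝ κ → EuclideanSpace ℝ κ}
    (hPmem : ∀ z, P z ∈ K) (hPproj : ∀ z, ∀ w ∈ K, ‖z - P z‖ ≤ ‖z - w‖)
    {x xnext : ι → EuclideanSpace ℝ κ} (hiter : ∀ i, xnext i = P (∑ j, W i j • x j)) :
    ∑ i, ‖xnext i - (Fintype.card ι : ℝ)⁻¹ • ∑ j, xnext j‖ ^ 2
      ≤ σ ^ 2 * ∑ i, ‖x i - (Fintype.card ι : ℝ)⁻¹ • ∑ j, x j‖ ^ 2 := by
  set m := (Fintype.card ι : ℝ)⁻¹ • ∑ j, x j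
  calc ∑ i, ‖xnext i - (Fintype.card ι : ℝ)⁻¹ • ∑ j, xnext j‖ ^ 2
      ≤ ∑ i, ‖xnext i - P m‖ ^ 2 := sum_norm_sub_mean_sq_le_s12 xnext (P m)
    _ ≤ ∑ i, ‖∑ j, W i j • x j - m‖ ^ 2 := by
        gcongr with i
        rw [hiter i]
        exact norm_proj_sub_proj_le hK hPmem hPproj _ _
    _ = ∑ i, ‖∑ j, W i j • (x j - m)‖ ^ 2 := by
        simp only [sum_smul_sub_eq_sum_smul_sub (hrow _)]
    _ ≤ σ ^ 2 * ∑ i, ‖x i - m‖ ^ 2 :=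
        sum_norm_sq_sum_smul_le_of_sum_eq_zero W hσ _ (sum_sub_mean_eq_zero x)

def Matrix.flattenEuclidean {m n : Type*} : Matrix m n ℝ ≃ₗ[ℝ] EuclideanSpace ℝ (m × n) where
  toFun A := WithLp.toLp 2 fun p => A p.1 p.2
  invFun y := Matrix.of fun i j => y (i, j)
  map_add' _ _ := rfl
  map_smul' _ _ := rfl
  left_inv _ := rfl
  right_inv _ := rfl

theorem fnorm_eq_norm_flattenEuclidean {d r : ℕ} (A : Matrix (Fin d) (Fin r) ℝ) :
    fnorm A = ‖Matrix.flattenEuclidean A‖ := by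
  rw [EuclideanSpace.norm_eq, Fintype.sum_prod_type]
  simp only [Real.norm_eq_abs, sq_abs]
  rfl

theorem norm_flattenEuclidean_symm {d r : ℕ} (y : EuclideanSpace ℝ (Fin d × Fin r)) :
    ‖y‖ = fnorm (Matrix.flattenEuclidean.symm y) := by
  rw [fnorm_eq_norm_flattenEuclidean, LinearEquiv.apply_symm_apply]

theorem stmt12_general {N d r : ℕ} (W : Matrix (Fin N) (Fin N) ℝ)
    (hrow : ∀ i, ∑ j, W i j = 1)
    (σ₂ : ℝ) (hσ₂0 : 0 ≤ σ₂)
    (hσ₂ : ∀ v : Fin N → ℝ, (∑ i, v i) = 0 →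
      ∑ i, (W.mulVec v i) ^ 2 ≤ σ₂ ^ 2 * ∑ i, (v i) ^ 2)
    (C : Set (Matrix (Fin d) (Fin r) ℝ))
    (hCconv : Convex ℝ C)
    (P : Matrix (Fin d) (Fin r) ℝ → Matrix (Fin d) (Fin r) ℝ)
    (hPmem : ∀ z, P z ∈ C)
    (hPproj : ∀ z, ∀ w ∈ C, fnorm (z - P z) ≤ fnorm (z - w))
    (x xnext : Fin N → Matrix (Fin d) (Fin r) ℝ)
    (hiter : ∀ i, xnext i = P (∑ j, W i j • x j)) :
    Real.sqrt (∑ i, fnorm (xnext i - ((N : ℝ))⁻¹ • ∑ j, xnext j) ^ 2)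
      ≤ σ₂ * Real.sqrt (∑ i, fnorm (x i - ((N : ℝ))⁻¹ • ∑ j, x j) ^ 2) := by
  have hK : Convex ℝ (Matrix.flattenEuclidean.symm ⁻¹' C) :=
    hCconv.linear_preimage Matrix.flattenEuclidean.symm.toLinearMap
  have hsq := sum_norm_sub_mean_sq_le_of_projected_consensus hrow hσ₂ hK
    (P := fun z => Matrix.flattenEuclidean (P (Matrix.flattenEuclidean.symm z)))
    (by simpa using fun z => hPmem _)
    (fun z w hw => by simpa [norm_flattenEuclidean_symm] using hPproj _ _ hw)
    (x := fun i => Matrix.flattenEuclidean (x i))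
    (xnext := fun i => Matrix.flattenEuclidean (xnext i))
    (by simp [hiter])
  simp only [Fintype.card_fin, ← map_sum, ← map_smul, ← map_sub,
    ← fnorm_eq_norm_flattenEuclidean] at hsq
  calc √(∑ i, fnorm (xnext i - ((N : ℝ))⁻¹ • ∑ j, xnext j) ^ 2)
      ≤ √(σ₂ ^ 2 * ∑ i, fnorm (x i - ((N : ℝ))⁻¹ • ∑ j, x j) ^ 2) := Real.sqrt_le_sqrt hsq
    _ = σ₂ * √(∑ i, fnorm (x i - ((N : ℝ))⁻¹ • ∑ j, x j) ^ 2) := by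
        rw [Real.sqrt_mul (sq_nonneg σ₂), Real.sqrt_sq hσ₂0]

theorem stmt12 {N d r : ℕ} (hN : 0 < N) (W : Matrix (Fin N) (Fin N) ℝ)
    (hsymm : W.IsSymm) (hnn : ∀ i j, 0 ≤ W i j) (hrow : ∀ i, ∑ j, W i j = 1)
    (heig : ∀ t : ℝ, (∃ v : Fin N → ℝ, v ≠ 0 ∧ W.mulVec v = t • v) → -1 < t ∧ t ≤ 1)
    (σ₂ : ℝ) (hσ₂0 : 0 ≤ σ₂)
    (hσ₂ : ∀ v : Fin N → ℝ, (∑ i, v i) = 0 →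
      ∑ i, (W.mulVec v i) ^ 2 ≤ σ₂ ^ 2 * ∑ i, (v i) ^ 2)
    (C : Set (Matrix (Fin d) (Fin r) ℝ)) (hCne : C.Nonempty)
    (hCconv : Convex ℝ C) (hCclosed : IsClosed C)
    (P : Matrix (Fin d) (Fin r) ℝ → Matrix (Fin d) (Fin r) ℝ)
    (hPmem : ∀ z, P z ∈ C)
    (hPproj : ∀ z, ∀ w ∈ C, fnorm (z - P z) ≤ fnorm (z - w))
    (x xnext : Fin N → Matrix (Fin d) (Fin r) ℝ)
    (hiter : ∀ i, xnext i = P (∑ j, W i j • x j)) :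
    Real.sqrt (∑ i, fnorm (xnext i - ((N : ℝ))⁻¹ • ∑ j, xnext j) ^ 2)
      ≤ σ₂ * Real.sqrt (∑ i, fnorm (x i - ((N : ℝ))⁻¹ • ∑ j, x j) ^ 2) :=
  stmt12_general W hrow σ₂ hσ₂0 hσ₂ C hCconv P hPmem hPproj x xnext hiter
end
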